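/- (Sabidussi for strict vector chromatic number) For any nonempty simple graphs G and H, the strict vector chromatic number of the Cartesian product G □ H equals the maximum of the strict vector chromatic numbers of G and H. -/

import Mathlib

/-!
A strict vector coloring of `G` at `k` is the same as a family of unit vectors with constant
inner product `c = -1/(k-1)` on edges. Such families pull back along graph homomorphisms, so a
coloring of `G □ H` restricts to colorings of `G` and `H` on the fibres. Conversely, colorings
`φ` of `G` and `χ` of `H` at the same `k` give the coloring `(u, w) ↦ φ u ⊗ χ w` of `G □ H`:
along an edge one factor contributes `c` and the other `1`. Hence the feasible set of `G □ H` is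
the intersection of those of `G` and `H`. Both are upward closed (adjoin a constant coordinate)
and, for finite nonempty graphs, nonempty (a regular simplex), so the infimum of the
intersection is the maximum of the infima.
-/

/-- The strict vector chromatic number: the infimum of real `k > 1` such that the
vertices can be assigned unit vectors with inner product exactly `-1/(k-1)` on edges.
It equals the Lovász theta function of the complement. -/
noncomputable def sVCN {V : Type*} (G : SimpleGraph V) : ℝ :=
  sInf {k : ℝ | 1 < k ∧ ∃ (d : ℕ) (φ : V → EuclideanSpace ℝ (Fin d)),
    (∀ v, ‖φ v‖ = 1) ∧ ∀ u v, G.Adj u v → (inner ℝ (φ u) (φ v) : ℝ) = -(1 / (k - 1))}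

open scoped RealInnerProductSpace TensorProduct

open Set in
theorem csInf_inter_eq_max_of_isUpperSet {α : Type*} [ConditionallyCompleteLinearOrder α]
    [DenselyOrdered α] [NoMaxOrder α] {A B : Set α} (hA : IsUpperSet A) (hB : IsUpperSet B)
    (hA₀ : A.Nonempty) (hB₀ : B.Nonempty) (hA₁ : BddBelow A) (hB₁ : BddBelow B) :
    sInf (A ∩ B) = max (sInf A) (sInf B) := by
  have hIoi : Ioi (max (sInf A) (sInf B)) ⊆ A ∩ B := fun x hx => by
    obtain ⟨a, ha, hax⟩ := exists_lt_of_csInf_lt hA₀ (max_lt_iff.mp hx).1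
    obtain ⟨b, hb, hbx⟩ := exists_lt_of_csInf_lt hB₀ (max_lt_iff.mp hx).2
    exact ⟨hA.Ioi_subset ha hax, hB.Ioi_subset hb hbx⟩
  apply le_antisymm
  · calc sInf (A ∩ B) ≤ sInf (Ioi (max (sInf A) (sInf B))) :=
          csInf_le_csInf (hA₁.mono inter_subset_left) nonempty_Ioi hIoi
      _ = _ := csInf_Ioi
  · exact le_csInf (nonempty_Ioi.mono hIoi) fun x hx =>
      max_le (csInf_le hA₁ hx.1) (csInf_le hB₁ hx.2)

namespace SimpleGraph

variable {V V' E F : Type*} [NormedAddCommGroup E] [InnerProductSpace ℝ E]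
  [NormedAddCommGroup F] [InnerProductSpace ℝ F]

def IsStrictVectorColoring (G : SimpleGraph V) (c : ℝ) (φ : V → E) : Prop :=
  (∀ v, ‖φ v‖ = 1) ∧ ∀ u v, G.Adj u v → ⟪φ u, φ v⟫ = c

def IsStrictVectorColorable (G : SimpleGraph V) (k : ℝ) : Prop :=
  1 < k ∧ ∃ (d : ℕ) (φ : V → EuclideanSpace ℝ (Fin d)),
    G.IsStrictVectorColoring (-(1 / (k - 1))) φ

theorem sVCN_eq_sInf (G : SimpleGraph V) :
    sVCN G = sInf {k | G.IsStrictVectorColorable k} := rfl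

variable {G : SimpleGraph V} {H : SimpleGraph V'} {c : ℝ}

namespace IsStrictVectorColoring

theorem comp {φ : V' → E} (hφ : H.IsStrictVectorColoring c φ) (f : G →g H) :
    G.IsStrictVectorColoring c (φ ∘ f) :=
  ⟨fun v => hφ.1 (f v), fun _ _ huv => hφ.2 _ _ (f.map_rel huv)⟩

theorem tmul {φ : V → E} {χ : V' → F} (hφ : G.IsStrictVectorColoring c φ)
    (hχ : H.IsStrictVectorColoring c χ) :
    (G □ H).IsStrictVectorColoring c (fun p => φ p.1 ⊗ₜ[ℝ] χ p.2) := by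
  refine ⟨fun p => by simp [hφ.1, hχ.1], fun p q hpq => ?_⟩
  rcases boxProd_adj.mp hpq with ⟨hadj, heq⟩ | ⟨hadj, heq⟩
  · simp [hφ.2 _ _ hadj, heq, hχ.1]
  · simp [hχ.2 _ _ hadj, heq, hφ.1]

theorem prodConst {φ : V → E} (hφ : G.IsStrictVectorColoring c φ) {t : ℝ} (ht₀ : 0 ≤ t)
    (ht₁ : t ≤ 1) : G.IsStrictVectorColoring (t * c + (1 - t))
      (fun v => WithLp.toLp 2 (√t • φ v, √(1 - t)) : V → WithLp 2 (E × ℝ)) := by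
  refine ⟨fun v => ?_, fun u v huv => ?_⟩
  · simp [WithLp.prod_norm_eq_of_L2, norm_smul, hφ.1, Real.sq_sqrt ht₀,
      Real.sq_sqrt (sub_nonneg.2 ht₁)]
  · simp only [WithLp.prod_inner_apply, real_inner_smul_left, real_inner_smul_right, hφ.2 u v huv,
      inner_self_eq_norm_sq_to_K, Real.norm_eq_abs, Real.ringHom_apply, sq_abs]
    rw [← mul_assoc, Real.mul_self_sqrt ht₀, Real.sq_sqrt (sub_nonneg.2 ht₁)]

theorem isStrictVectorColorable [FiniteDimensional ℝ E] {k : ℝ} (hk : 1 < k) {φ : V → E}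
    (hφ : G.IsStrictVectorColoring (-(1 / (k - 1))) φ) : G.IsStrictVectorColorable k := by
  let e := (stdOrthonormalBasis ℝ E).repr
  exact ⟨hk, _, fun v => e (φ v), fun v => by rw [e.norm_map, hφ.1 v],
    fun u v huv => by rw [e.inner_map_map, hφ.2 u v huv]⟩

end IsStrictVectorColoring

theorem isStrictVectorColoring_inv_sqrt_smul {ψ : V → E} {p q : ℝ} (hp : 0 < p)
    (hnorm : ∀ v, ⟪ψ v, ψ v⟫ = p) (hadj : ∀ u v, G.Adj u v → ⟪ψ u, ψ v⟫ = q) :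
    G.IsStrictVectorColoring (q / p) (fun v => (√p)⁻¹ • ψ v) := by
  have hinner : ∀ u v, ⟪(√p)⁻¹ • ψ u, (√p)⁻¹ • ψ v⟫ = ⟪ψ u, ψ v⟫ / p := fun u v => by
    rw [real_inner_smul_left, real_inner_smul_right, ← mul_assoc, ← mul_inv,
      Real.mul_self_sqrt hp.le, inv_mul_eq_div]
  refine ⟨fun v => ?_, fun u v huv => by rw [hinner, hadj u v huv]⟩
  rw [norm_eq_sqrt_real_inner, hinner, hnorm, div_self hp.ne', Real.sqrt_one]

theorem exists_isStrictVectorColoring_top {ι : Type*} [Fintype ι] [DecidableEq ι]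
    (hι : 2 ≤ Fintype.card ι) : ∃ φ : ι → EuclideanSpace ℝ ι,
      (⊤ : SimpleGraph ι).IsStrictVectorColoring (-(1 / (Fintype.card ι - 1))) φ := by
  set N : ℝ := (Fintype.card ι : ℝ)
  have hN : (2 : ℝ) ≤ N := by simp only [N]; exact_mod_cast hι
  let ones : EuclideanSpace ℝ ι := WithLp.toLp 2 fun _ => 1
  have hones : ⟪ones, ones⟫ = N := by rw [PiLp.inner_apply]; simp [ones, N]
  have hsingle_ones : ∀ i, ⟪EuclideanSpace.single i (1 : ℝ), ones⟫ = 1 := by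
    simp [ones, EuclideanSpace.inner_single_left]
  have hsingle : ∀ i j : ι, ⟪EuclideanSpace.single i (1 : ℝ), EuclideanSpace.single j 1⟫ =
      if i = j then 1 else 0 := by
    simp [EuclideanSpace.inner_single_left, PiLp.single_apply]
  -- the vertices of the regular simplex, centred at the origin
  let ψ : ι → EuclideanSpace ℝ ι := fun i => EuclideanSpace.single i 1 - N⁻¹ • ones
  have hψ : ∀ i j, ⟪ψ i, ψ j⟫ = (if i = j then 1 else 0) - N⁻¹ := fun i j => by
    simp only [ψ, inner_sub_left, inner_sub_right, real_inner_smul_left, real_inner_smul_right,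
      hsingle, hsingle_ones, real_inner_comm _ ones, hones]
    field_simp
    ring
  have hc : -(1 / (N - 1)) = -N⁻¹ / (1 - N⁻¹) := by
    field_simp
  rw [hc]
  refine ⟨_, isStrictVectorColoring_inv_sqrt_smul (ψ := ψ)
    (by simpa using inv_lt_one_of_one_lt₀ (by linarith)) (fun i => ?_) (fun i j hij => ?_)⟩
  · rw [hψ, if_pos rfl]
  · rw [hψ, if_neg hij, zero_sub]

namespace IsStrictVectorColorable

variable {k : ℝ}

theorem comp (h : H.IsStrictVectorColorable k) (f : G →g H) : G.IsStrictVectorColorable k := by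
  obtain ⟨hk, d, φ, hφ⟩ := h
  exact ⟨hk, d, φ ∘ f, hφ.comp f⟩

theorem boxProd (hG : G.IsStrictVectorColorable k) (hH : H.IsStrictVectorColorable k) :
    (G □ H).IsStrictVectorColorable k := by
  obtain ⟨hk, _, φ, hφ⟩ := hG
  obtain ⟨-, _, χ, hχ⟩ := hH
  exact (hφ.tmul hχ).isStrictVectorColorable hk

theorem mono (h : G.IsStrictVectorColorable k) {k' : ℝ} (hkk' : k ≤ k') :
    G.IsStrictVectorColorable k' := by
  obtain ⟨hk, _, φ, hφ⟩ := h
  have hk' : 1 < k' := hk.trans_le hkk'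
  -- chosen so that `t * c + (1 - t) = c'` for `c = -1/(k-1)`, `c' = -1/(k'-1)`
  set t := k' * (k - 1) / (k * (k' - 1))
  have ht₀ : 0 ≤ t := by positivity
  have ht₁ : t ≤ 1 := by
    rw [div_le_one (by positivity)]
    nlinarith
  have hc : t * -(1 / (k - 1)) + (1 - t) = -(1 / (k' - 1)) := by
    have : k - 1 ≠ 0 := by linarith
    have : k' - 1 ≠ 0 := by linarith
    simp only [t]
    field_simp
    ring
  exact (hc ▸ hφ.prodConst ht₀ ht₁).isStrictVectorColorable hk'

end IsStrictVectorColorable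

theorem isStrictVectorColorable_boxProd_iff [Nonempty V] [Nonempty V'] {k : ℝ} :
    (G □ H).IsStrictVectorColorable k ↔
      G.IsStrictVectorColorable k ∧ H.IsStrictVectorColorable k :=
  ⟨fun h => ⟨h.comp (G.boxProdLeft H (Classical.arbitrary V')).toHom,
    h.comp (G.boxProdRight H (Classical.arbitrary V)).toHom⟩, fun h => h.1.boxProd h.2⟩

theorem isStrictVectorColorable_card_add_one [Fintype V] [Nonempty V] (G : SimpleGraph V) :
    G.IsStrictVectorColorable (Fintype.card V + 1) := by
  classical
  obtain ⟨φ, hφ⟩ := exists_isStrictVectorColoring_top (ι := Option V)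
    (by simp [Nat.succ_le_iff, Fintype.card_pos])
  rw [Fintype.card_option, Nat.cast_add_one] at hφ
  have f : G →g ⊤ := ⟨some, fun huv => (Option.some_injective _).ne huv.ne⟩
  exact (hφ.comp f).isStrictVectorColorable (by simp [Fintype.card_pos])

theorem isUpperSet_setOf_isStrictVectorColorable (G : SimpleGraph V) :
    IsUpperSet {k | G.IsStrictVectorColorable k} :=
  fun _ _ hkk' h => h.mono hkk'

theorem bddBelow_setOf_isStrictVectorColorable (G : SimpleGraph V) :
    BddBelow {k | G.IsStrictVectorColorable k} :=
  ⟨1, fun _ h => h.1.le⟩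

end SimpleGraph

open SimpleGraph in
theorem stmt9 {U W : Type*} [Fintype U] [Fintype W] [Nonempty U] [Nonempty W]
    (G : SimpleGraph U) (H : SimpleGraph W) :
    sVCN (G.boxProd H) = max (sVCN G) (sVCN H) := by
  simp only [sVCN_eq_sInf, isStrictVectorColorable_boxProd_iff]
  exact csInf_inter_eq_max_of_isUpperSet G.isUpperSet_setOf_isStrictVectorColorable
    H.isUpperSet_setOf_isStrictVectorColorable ⟨_, G.isStrictVectorColorable_card_add_one⟩
    ⟨_, H.isStrictVectorColorable_card_add_one⟩ G.bddBelow_setOf_isStrictVectorColorable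
    H.bddBelow_setOf_isStrictVectorColorable
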